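/- arXiv:2604.22424 — 2 statements merged into one kernel-verified Lean document; each statement's English description precedes it below -/
import Mathlib

section
/- For real parameters M, a, k and any smooth complex-valued function F on an open subset of ℝ⁴ (coordinates (t,r,q,φ)) on which C(r) > 0 and D(q) > 0, the operators O'_k and O_k^T are related by the similarity transformation O'_k F = √D · C^{(1+k)/2} · O_k^T( F / (√D · C^{(1+k)/2}) ) pointwise. -/
open Complex

noncomputable section

namespace TeukolskySimilarity

/-- Points of `ℝ⁴` in coordinates `(t, r, q, φ)`: index `0 = t`, `1 = r`,
`2 = q`, `3 = φ`. -/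
abbrev Pt := Fin 4 → ℝ

/-- Partial derivative in the `μ`-th coordinate direction. -/
def pd (μ : Fin 4) (F : Pt → ℂ) (x : Pt) : ℂ := fderiv ℝ F x (Pi.single μ 1)

/-- `C(r) = r² − 2Mr + a²`. -/
def Cf (M a : ℝ) (x : Pt) : ℝ := (x 1) ^ 2 - 2 * M * (x 1) + a ^ 2
/-- `D(q) = 1 − q²`. -/
def Df (x : Pt) : ℝ := 1 - (x 2) ^ 2

/-- `XF = (r² + a²)∂_t F + a ∂_φ F`. -/
def Xop (a : ℝ) (F : Pt → ℂ) (x : Pt) : ℂ :=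
  (((x 1) ^ 2 + a ^ 2 : ℝ) : ℂ) * pd 0 F x + (a : ℂ) * pd 3 F x
/-- `YF = a(1 − q²)∂_t F + ∂_φ F`. -/
def Yop (a : ℝ) (F : Pt → ℂ) (x : Pt) : ℂ :=
  ((a * (1 - (x 2) ^ 2) : ℝ) : ℂ) * pd 0 F x + pd 3 F x

/-- The spin-`k` Teukolsky operator `O_k^T`. -/
def OkT (M a k : ℝ) (F : Pt → ℂ) (x : Pt) : ℂ :=
  ((((x 1) ^ 2 + a ^ 2) ^ 2 / Cf M a x - a ^ 2 * Df x : ℝ) : ℂ) * pd 0 (pd 0 F) x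
  + ((4 * M * a * (x 1) / Cf M a x : ℝ) : ℂ) * pd 0 (pd 3 F) x
  + ((a ^ 2 / Cf M a x - 1 / Df x : ℝ) : ℂ) * pd 3 (pd 3 F) x
  - ((Cf M a x ^ (-k) : ℝ) : ℂ) *
      pd 1 (fun y => ((Cf M a y ^ (k + 1) : ℝ) : ℂ) * pd 1 F y) x
  - pd 2 (fun y => (Df y : ℂ) * pd 2 F y) x
  - ((2 * k : ℝ) : ℂ) * (((M * ((x 1) ^ 2 - a ^ 2) / Cf M a x - x 1 : ℝ) : ℂ)
      + Complex.I * (a : ℂ) * ((x 2 : ℝ) : ℂ)) * pd 0 F x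
  - ((2 * k : ℝ) : ℂ) * (((a * ((x 1) - M) / Cf M a x : ℝ) : ℂ)
      - Complex.I * ((x 2 : ℝ) : ℂ) / (Df x : ℂ)) * pd 3 F x
  + ((k ^ 2 * (x 2) ^ 2 / Df x - k : ℝ) : ℂ) * F x

/-- The separated Kähler operator `O'_k`. -/
def Ok' (M a k : ℝ) (F : Pt → ℂ) (x : Pt) : ℂ :=
  (1 / (Cf M a x : ℂ)) * Xop a (Xop a F) x - (Cf M a x : ℂ) * pd 1 (pd 1 F) x
  + ((4 * k * (x 1) : ℝ) : ℂ) * pd 0 F x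
  - (k : ℂ) * ((2 * ((x 1) - M) / Cf M a x : ℝ) : ℂ) * Xop a F x
  - (1 / (Df x : ℂ)) * Yop a (Yop a F) x - (Df x : ℂ) * pd 2 (pd 2 F) x
  - 4 * Complex.I * (k : ℂ) * (a : ℂ) * ((x 2 : ℝ) : ℂ) * pd 0 F x
  - Complex.I * (k : ℂ) * ((-2 * (x 2) / Df x : ℝ) : ℂ) * Yop a F x
  + (((k ^ 2 - 1) * ((x 2) ^ 2 / Df x + ((x 1) - M) ^ 2 / Cf M a x) : ℝ) : ℂ) * F x

/-! ### helpers -/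

private def pj (i : Fin 4) : Pt →L[ℝ] ℝ := ContinuousLinearMap.proj i

private lemma pj_single (i μ : Fin 4) : pj i (Pi.single μ 1) = if i = μ then 1 else 0 := by
  simp [pj, Pi.single_apply]

private def HD (h : Pt → ℝ) (α β : ℝ) (y : Pt) : Prop :=
  HasFDerivAt h (α • pj 1 + β • pj 2) y

private lemma mkHD {h : Pt → ℝ} {α β : ℝ} {y : Pt} {L : Pt →L[ℝ] ℝ}
    (hL : HasFDerivAt h L y) (hval : ∀ v : Pt, L v = α * v 1 + β * v 2) : HD h α β y := by
  unfold HD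
  convert hL using 1
  ext v
  simp [pj, hval v]

private lemma HD.diff {h α β y} (H : HD h α β y) : DifferentiableAt ℝ h y :=
  HasFDerivAt.differentiableAt H

private lemma HD.fder {h α β y} (H : HD h α β y) :
    HasFDerivAt h (α • pj 1 + β • pj 2) y := H

private lemma HD.eval0 {h α β y} (H : HD h α β y) : fderiv ℝ h y (Pi.single 0 1) = 0 := by
  rw [HasFDerivAt.fderiv H.fder]
  have h1 : (1 : Fin 4) ≠ 0 := by decide
  have h2 : (2 : Fin 4) ≠ 0 := by decide
  simp [pj_single, h1, h2]
private lemma HD.eval1 {h α β y} (H : HD h α β y) : fderiv ℝ h y (Pi.single 1 1) = α := by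
  rw [HasFDerivAt.fderiv H.fder]
  have h2 : (2 : Fin 4) ≠ 1 := by decide
  simp [pj_single, h2]
private lemma HD.eval2 {h α β y} (H : HD h α β y) : fderiv ℝ h y (Pi.single 2 1) = β := by
  rw [HasFDerivAt.fderiv H.fder]
  have h1 : (1 : Fin 4) ≠ 2 := by decide
  simp [pj_single, h1]
private lemma HD.eval3 {h α β y} (H : HD h α β y) : fderiv ℝ h y (Pi.single 3 1) = 0 := by
  rw [HasFDerivAt.fderiv H.fder]
  have h1 : (1 : Fin 4) ≠ 3 := by decide
  have h2 : (2 : Fin 4) ≠ 3 := by decide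
  simp [pj_single, h1, h2]

private lemma HD.mul' {h₁ h₂ : Pt → ℝ} {α₁ β₁ α₂ β₂ : ℝ} {y : Pt}
    (H₁ : HD h₁ α₁ β₁ y) (H₂ : HD h₂ α₂ β₂ y) :
    HD (fun z => h₁ z * h₂ z) (α₁ * h₂ y + h₁ y * α₂) (β₁ * h₂ y + h₁ y * β₂) y :=
  mkHD (HasFDerivAt.mul H₁.fder H₂.fder) (by intro v; simp [pj]; ring)

private lemma HD.sub' {h₁ h₂ : Pt → ℝ} {α₁ β₁ α₂ β₂ : ℝ} {y : Pt}
    (H₁ : HD h₁ α₁ β₁ y) (H₂ : HD h₂ α₂ β₂ y) :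
    HD (fun z => h₁ z - h₂ z) (α₁ - α₂) (β₁ - β₂) y :=
  mkHD (HasFDerivAt.sub H₁.fder H₂.fder) (by intro v; simp [pj]; ring)

private lemma HD.cmul {h : Pt → ℝ} {α β : ℝ} {y : Pt} (c : ℝ) (H : HD h α β y) :
    HD (fun z => c * h z) (c * α) (c * β) y :=
  mkHD (HasFDerivAt.const_mul H.fder c) (by intro v; simp [pj]; ring)

private lemma HD.add_const' {h : Pt → ℝ} {α β : ℝ} {y : Pt} (H : HD h α β y) (c : ℝ) :
    HD (fun z => h z + c) α β y :=
  mkHD (H.fder.add_const c) (by intro v; simp [pj])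

private lemma HD.const_sub' {h : Pt → ℝ} {α β : ℝ} {y : Pt} (H : HD h α β y) (c : ℝ) :
    HD (fun z => c - h z) (-α) (-β) y :=
  mkHD (HasFDerivAt.const_sub H.fder c) (by intro v; simp [pj]; ring)

private lemma HD_of {h h' : Pt → ℝ} {α β α' β' : ℝ} {y : Pt} (H : HD h α β y)
    (hh : ∀ z, h' z = h z) (hα : α' = α) (hβ : β' = β) : HD h' α' β' y := by
  subst hα; subst hβ
  have : h' = h := funext hh
  rw [HD, this]; exact H

private lemma HD_const (c : ℝ) (y : Pt) : HD (fun _ => c) 0 0 y :=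
  mkHD (hasFDerivAt_const c y) (by intro v; simp)

private lemma HD_r (y : Pt) : HD (fun z => z 1) 1 0 y :=
  mkHD ((pj 1).hasFDerivAt) (by intro v; simp [pj])

private lemma HD_q (y : Pt) : HD (fun z => z 2) 0 1 y :=
  mkHD ((pj 2).hasFDerivAt) (by intro v; simp [pj])

private lemma HD.rpow {h : Pt → ℝ} {α β : ℝ} {y : Pt} (H : HD h α β y) (s : ℝ) (h0 : h y ≠ 0) :
    HD (fun z => h z ^ s) (s * h y ^ (s - 1) * α) (s * h y ^ (s - 1) * β) y :=
  mkHD (HasFDerivAt.rpow_const H.fder (Or.inl h0) (p := s)) (by intro v; simp [pj]; ring)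

private lemma HD_Cf (M a : ℝ) (y : Pt) : HD (Cf M a) (2 * y 1 - 2 * M) 0 y := by
  refine HD_of ((((HD_r y).mul' (HD_r y)).sub' (HD.cmul (2 * M) (HD_r y))).add_const' (a ^ 2))
    (fun z => by simp [Cf]; ring) (by ring) (by ring)

private lemma HD_Df (y : Pt) : HD Df 0 (-2 * y 2) y := by
  refine HD_of (((HD_q y).mul' (HD_q y)).const_sub' 1)
    (fun z => by simp [Df]; ring) (by ring) (by ring)

private lemma HD_A1 (a : ℝ) (y : Pt) : HD (fun z => (z 1) ^ 2 + a ^ 2) (2 * y 1) 0 y := by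
  refine HD_of (((HD_r y).mul' (HD_r y)).add_const' (a ^ 2))
    (fun z => by ring) (by ring) (by ring)

private lemma HD_A2 (a : ℝ) (y : Pt) : HD (fun z => a * (1 - (z 2) ^ 2)) 0 (-2 * a * y 2) y := by
  refine HD_of (HD.cmul a (((HD_q y).mul' (HD_q y)).const_sub' 1))
    (fun z => by ring) (by ring) (by ring)

private lemma HD.diffC {h α β y} (H : HD h α β y) :
    DifferentiableAt ℝ (fun z => ((h z : ℝ) : ℂ)) y :=
  Complex.ofRealCLM.differentiable.differentiableAt.comp y H.diff

private lemma pd_mulc (μ : Fin 4) {h : Pt → ℝ} {α β : ℝ} {G : Pt → ℂ} {y : Pt}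
    (H : HD h α β y) (hG : DifferentiableAt ℝ G y) :
    pd μ (fun z => ((h z : ℝ) : ℂ) * G z) y
      = ((fderiv ℝ h y (Pi.single μ 1) : ℝ) : ℂ) * G y + ((h y : ℝ) : ℂ) * pd μ G y := by
  have hC : HasFDerivAt (fun z => ((h z : ℝ) : ℂ))
      (Complex.ofRealCLM.comp (α • pj 1 + β • pj 2)) y :=
    Complex.ofRealCLM.hasFDerivAt.comp y H.fder
  unfold pd
  rw [fderiv_fun_mul hC.differentiableAt hG, HasFDerivAt.fderiv H.fder]
  simp [hC.fderiv, smul_eq_mul]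
  ring

private lemma pd_add {f g : Pt → ℂ} {x : Pt} (μ : Fin 4)
    (hf : DifferentiableAt ℝ f x) (hg : DifferentiableAt ℝ g x) :
    pd μ (fun y => f y + g y) x = pd μ f x + pd μ g x := by
  unfold pd; rw [fderiv_fun_add hf hg]; simp

private lemma pd_congr {f g : Pt → ℂ} {x : Pt} (μ : Fin 4) (h : f =ᶠ[nhds x] g) :
    pd μ f x = pd μ g x := by
  unfold pd; rw [Filter.EventuallyEq.fderiv_eq h]

private lemma evU {f g : Pt → ℂ} {U : Set Pt} (hU : IsOpen U) {x : Pt} (hx : x ∈ U)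
    (h : ∀ y ∈ U, f y = g y) : f =ᶠ[nhds x] g :=
  Filter.eventually_of_mem (hU.mem_nhds hx) h

private lemma pd_symm {G : Pt → ℂ} {U : Set Pt} (hU : IsOpen U) {x : Pt} (hx : x ∈ U)
    (hG : ContDiffOn ℝ (⊤ : ℕ∞) G U) (μ ν : Fin 4) :
    pd μ (pd ν G) x = pd ν (pd μ G) x := by
  have hfd : ContDiffOn ℝ (⊤ : ℕ∞) (fderiv ℝ G) U := hG.fderiv_of_isOpen hU (by simp)
  have hdiff2 : DifferentiableAt ℝ (fderiv ℝ G) x :=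
    ((hfd.contDiffAt (hU.mem_nhds hx)).differentiableAt (by simp))
  have hev : ∀ᶠ y in nhds x, HasFDerivAt G (fderiv ℝ G y) y := by
    filter_upwards [hU.mem_nhds hx] with y hy
    exact ((hG.contDiffAt (hU.mem_nhds hy)).differentiableAt (by simp)).hasFDerivAt
  have hsym := second_derivative_symmetric_of_eventually hev hdiff2.hasFDerivAt
  have key : ∀ ρ σ : Fin 4, pd ρ (pd σ G) x
      = fderiv ℝ (fderiv ℝ G) x (Pi.single ρ 1) (Pi.single σ 1) := by
    intro ρ σ
    have h1 : pd σ G = fun y => (ContinuousLinearMap.apply ℝ ℂ (Pi.single σ 1)) (fderiv ℝ G y) := by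
      funext y; rfl
    have h2 : HasFDerivAt (pd σ G)
        ((ContinuousLinearMap.apply ℝ ℂ (Pi.single σ 1)).comp (fderiv ℝ (fderiv ℝ G) x)) x := by
      rw [h1]
      exact (ContinuousLinearMap.apply ℝ ℂ (Pi.single σ 1)).hasFDerivAt.comp x
        hdiff2.hasFDerivAt
    show fderiv ℝ (pd σ G) x (Pi.single ρ 1) = _
    rw [h2.fderiv]
    rfl
  rw [key μ ν, key ν μ]
  exact hsym _ _

private lemma pd_diffOn {G : Pt → ℂ} {U : Set Pt} (hU : IsOpen U)
    (hG : ContDiffOn ℝ (⊤ : ℕ∞) G U) (ν : Fin 4) {x : Pt} (hx : x ∈ U) :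
    DifferentiableAt ℝ (pd ν G) x := by
  have hfd : ContDiffOn ℝ (⊤ : ℕ∞) (fderiv ℝ G) U := hG.fderiv_of_isOpen hU (by simp)
  have h1 : pd ν G = fun y => (ContinuousLinearMap.apply ℝ ℂ (Pi.single ν 1)) (fderiv ℝ G y) := by
    funext y; rfl
  rw [h1]
  exact (ContinuousLinearMap.apply ℝ ℂ (Pi.single ν 1)).differentiableAt.comp x
    ((hfd.contDiffAt (hU.mem_nhds hx)).differentiableAt (by simp))

private lemma contDiff_Cf (M a : ℝ) : ContDiff ℝ (⊤ : ℕ∞) (Cf M a) := by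
  have h1 : ContDiff ℝ (⊤ : ℕ∞) (fun z : Pt => z 1) := (ContinuousLinearMap.proj 1 : Pt →L[ℝ] ℝ).contDiff
  exact ((h1.pow 2).sub (h1.const_smul (2 * M))).add contDiff_const

private lemma contDiff_Df : ContDiff ℝ (⊤ : ℕ∞) Df := by
  have h2 : ContDiff ℝ (⊤ : ℕ∞) (fun z : Pt => z 2) := (ContinuousLinearMap.proj 2 : Pt →L[ℝ] ℝ).contDiff
  exact contDiff_const.sub (h2.pow 2)

set_option maxHeartbeats 4000000

/-- `O'_k F = √D · C^{(1+k)/2} · O_k^T( F / (√D · C^{(1+k)/2}) )` pointwise on any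
open set on which `C > 0` and `D > 0`. -/
theorem Ok'_similarity_OkT (M a k : ℝ)
    (U : Set Pt) (hU : IsOpen U)
    (hpos : ∀ x ∈ U, 0 < Cf M a x ∧ 0 < Df x)
    (F : Pt → ℂ) (hF : ContDiffOn ℝ (⊤ : ℕ∞) F U) :
    ∀ x ∈ U,
      Ok' M a k F x
      = ((Real.sqrt (Df x) * Cf M a x ^ ((1 + k) / 2) : ℝ) : ℂ) *
          OkT M a k
            (fun y => F y / ((Real.sqrt (Df y) * Cf M a y ^ ((1 + k) / 2) : ℝ) : ℂ)) x := by
  intro x hx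
  obtain ⟨hc, hd⟩ := hpos x hx
  simp only [Real.sqrt_eq_rpow]
  set p : ℝ := (1 + k) / 2 with hpdef
  set G : Pt → ℂ := fun y => F y / ((Df y ^ ((1:ℝ)/2) * Cf M a y ^ p : ℝ) : ℂ) with hGdef
  set w : Pt → ℝ := fun y => Df y ^ ((1:ℝ)/2) * Cf M a y ^ p with hwdef
  set W1 : Pt → ℝ := fun y =>
    Df y ^ ((1:ℝ)/2) * (p * Cf M a y ^ (p - 1) * (2 * y 1 - 2 * M)) with hW1def
  set W2 : Pt → ℝ := fun y =>
    ((1:ℝ)/2 * Df y ^ ((1:ℝ)/2 - 1) * (-2 * y 2)) * Cf M a y ^ p with hW2def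
  -- nonvanishing facts on U
  have hcU : ∀ y ∈ U, Cf M a y ≠ 0 := fun y hy => ne_of_gt (hpos y hy).1
  have hdU : ∀ y ∈ U, Df y ≠ 0 := fun y hy => ne_of_gt (hpos y hy).2
  have hwU : ∀ y ∈ U, w y ≠ 0 := by
    intro y hy
    exact mul_ne_zero (ne_of_gt (Real.rpow_pos_of_pos (hpos y hy).2 _))
      (ne_of_gt (Real.rpow_pos_of_pos (hpos y hy).1 _))
  -- HD facts
  have HDw : ∀ y ∈ U, HD w (W1 y) (W2 y) y := by
    intro y hy
    refine HD_of (((HD_Df y).rpow ((1:ℝ)/2) (hdU y hy)).mul'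
      ((HD_Cf M a y).rpow p (hcU y hy))) (fun z => rfl) ?_ ?_
    · simp only [hW1def]; ring
    · simp only [hW2def]; ring
  -- smoothness of G
  have hwsm : ContDiffOn ℝ (⊤ : ℕ∞) w U := by
    have h1 : ContDiffOn ℝ (⊤ : ℕ∞) (fun y => Df y ^ ((1:ℝ)/2)) U := by
      intro y hy
      exact ((Real.contDiffAt_rpow_const_of_ne (hdU y hy)).comp y
        contDiff_Df.contDiffAt).contDiffWithinAt
    have h2 : ContDiffOn ℝ (⊤ : ℕ∞) (fun y => Cf M a y ^ p) U := by
      intro y hy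
      exact ((Real.contDiffAt_rpow_const_of_ne (hcU y hy)).comp y
        (contDiff_Cf M a).contDiffAt).contDiffWithinAt
    exact h1.mul h2
  have hwinv : ContDiffOn ℝ (⊤ : ℕ∞) (fun y => ((w y : ℝ) : ℂ)⁻¹) U := by
    have h := Complex.ofRealCLM.contDiff.comp_contDiffOn (hwsm.inv hwU)
    have h2 : (fun y => ((w y : ℝ) : ℂ)⁻¹) = fun y => (((w y)⁻¹ : ℝ) : ℂ) := by
      funext y; rw [Complex.ofReal_inv]
    rw [h2]; exact h
  have hGsm : ContDiffOn ℝ (⊤ : ℕ∞) G U := by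
    have h2 : G = fun y => F y * ((Df y ^ ((1:ℝ)/2) * Cf M a y ^ p : ℝ) : ℂ)⁻¹ := by
      funext y; simp only [hGdef]; rw [div_eq_mul_inv]
    rw [h2]; exact hF.mul hwinv
  have hGd : ∀ y ∈ U, DifferentiableAt ℝ G y :=
    fun y hy => (hGsm.contDiffAt (hU.mem_nhds hy)).differentiableAt (by simp)
  have hPd : ∀ ν : Fin 4, DifferentiableAt ℝ (pd ν G) x :=
    fun ν => pd_diffOn hU hGsm ν hx
  have hGx : DifferentiableAt ℝ G x := hGd x hx
  -- F = w * G on U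
  have hFeq : ∀ y ∈ U, F y = ((w y : ℝ) : ℂ) * G y := by
    intro y hy
    have h1 : ((Df y ^ ((1:ℝ)/2) : ℝ) : ℂ) ≠ 0 :=
      Complex.ofReal_ne_zero.mpr (Real.rpow_pos_of_pos (hpos y hy).2 _).ne'
    have h2 : ((Cf M a y ^ p : ℝ) : ℂ) ≠ 0 :=
      Complex.ofReal_ne_zero.mpr (Real.rpow_pos_of_pos (hpos y hy).1 _).ne'
    simp only [hGdef, hwdef]
    push_cast
    field_simp
  -- first derivatives of F on U
  have hF0 : ∀ y ∈ U, pd 0 F y = ((w y : ℝ) : ℂ) * pd 0 G y := by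
    intro y hy
    rw [pd_congr 0 (evU hU hy hFeq), pd_mulc 0 (HDw y hy) (hGd y hy), (HDw y hy).eval0]
    simp
  have hF3 : ∀ y ∈ U, pd 3 F y = ((w y : ℝ) : ℂ) * pd 3 G y := by
    intro y hy
    rw [pd_congr 3 (evU hU hy hFeq), pd_mulc 3 (HDw y hy) (hGd y hy), (HDw y hy).eval3]
    simp
  have hF1 : ∀ y ∈ U, pd 1 F y = ((W1 y : ℝ) : ℂ) * G y + ((w y : ℝ) : ℂ) * pd 1 G y := by
    intro y hy
    rw [pd_congr 1 (evU hU hy hFeq), pd_mulc 1 (HDw y hy) (hGd y hy), (HDw y hy).eval1]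
  have hF2 : ∀ y ∈ U, pd 2 F y = ((W2 y : ℝ) : ℂ) * G y + ((w y : ℝ) : ℂ) * pd 2 G y := by
    intro y hy
    rw [pd_congr 2 (evU hU hy hFeq), pd_mulc 2 (HDw y hy) (hGd y hy), (HDw y hy).eval2]
  -- symmetry
  have hsym30 : pd 3 (pd 0 G) x = pd 0 (pd 3 G) x := pd_symm hU hx hGsm 3 0

  -- HD of W1 and W2 at x
  have Hlin : HD (fun z => 2 * z 1 - 2 * M) 2 0 x :=
    HD_of ((HD.cmul 2 (HD_r x)).sub' (HD_const (2 * M) x)) (fun z => rfl) (by ring) (by ring)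
  have Hmq : HD (fun z => -2 * z 2) 0 (-2) x :=
    HD_of (HD.cmul (-2) (HD_q x)) (fun z => rfl) (by ring) (by ring)
  have HW1x : HD W1
      (Df x ^ ((1:ℝ)/2) * (p * (p - 1) * Cf M a x ^ (p - 1 - 1) * (2 * x 1 - 2 * M) ^ 2
        + 2 * p * Cf M a x ^ (p - 1)))
      ((1/2 * Df x ^ ((1:ℝ)/2 - 1) * (-2 * x 2)) * (p * Cf M a x ^ (p - 1) * (2 * x 1 - 2 * M)))
      x := by
    refine HD_of (((HD_Df x).rpow ((1:ℝ)/2) hd.ne').mul'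
      ((HD.cmul p ((HD_Cf M a x).rpow (p - 1) hc.ne')).mul' Hlin))
      (fun z => rfl) (by ring) (by ring)
  have HW2x : HD W2
      ((1/2 * Df x ^ ((1:ℝ)/2 - 1) * (-2 * x 2)) * (p * Cf M a x ^ (p - 1) * (2 * x 1 - 2 * M)))
      ((1/2 * (((1:ℝ)/2 - 1) * Df x ^ ((1:ℝ)/2 - 1 - 1) * (-2 * x 2)) * (-2 * x 2)
        + 1/2 * Df x ^ ((1:ℝ)/2 - 1) * (-2)) * Cf M a x ^ p)
      x := by
    refine HD_of (((HD.cmul (1/2) ((HD_Df x).rpow ((1:ℝ)/2 - 1) hd.ne')).mul' Hmq).mul'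
      ((HD_Cf M a x).rpow p hc.ne'))
      (fun z => rfl) (by ring) (by ring)
  have Hw := HDw x hx
  -- second derivatives, r and q directions
  have hp11 : pd 1 (pd 1 F) x
      = ((fderiv ℝ W1 x (Pi.single 1 1) : ℝ) : ℂ) * G x + 2 * ((W1 x : ℝ) : ℂ) * pd 1 G x
        + ((w x : ℝ) : ℂ) * pd 1 (pd 1 G) x := by
    rw [pd_congr 1 (evU hU hx hF1),
      pd_add 1 (HW1x.diffC.fun_mul hGx) (Hw.diffC.fun_mul (hPd 1)),
      pd_mulc 1 HW1x hGx, pd_mulc 1 Hw (hPd 1), Hw.eval1]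
    ring
  have hp22 : pd 2 (pd 2 F) x
      = ((fderiv ℝ W2 x (Pi.single 2 1) : ℝ) : ℂ) * G x + 2 * ((W2 x : ℝ) : ℂ) * pd 2 G x
        + ((w x : ℝ) : ℂ) * pd 2 (pd 2 G) x := by
    rw [pd_congr 2 (evU hU hx hF2),
      pd_add 2 (HW2x.diffC.fun_mul hGx) (Hw.diffC.fun_mul (hPd 2)),
      pd_mulc 2 HW2x hGx, pd_mulc 2 Hw (hPd 2), Hw.eval2]
    ring
  -- X operator
  have HA1w : HD (fun z => ((z 1) ^ 2 + a ^ 2) * w z)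
      (2 * x 1 * w x + ((x 1) ^ 2 + a ^ 2) * W1 x)
      (0 * w x + ((x 1) ^ 2 + a ^ 2) * W2 x) x := (HD_A1 a x).mul' Hw
  have Haw : HD (fun z => a * w z) (a * W1 x) (a * W2 x) x := HD.cmul a Hw
  have HA2w : HD (fun z => (a * (1 - (z 2) ^ 2)) * w z)
      (0 * w x + a * (1 - (x 2) ^ 2) * W1 x)
      (-2 * a * x 2 * w x + a * (1 - (x 2) ^ 2) * W2 x) x := (HD_A2 a x).mul' Hw
  have hXFU : ∀ y ∈ U, Xop a F y
      = ((((y 1) ^ 2 + a ^ 2) * w y : ℝ) : ℂ) * pd 0 G y + ((a * w y : ℝ) : ℂ) * pd 3 G y := by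
    intro y hy
    simp only [Xop]
    rw [hF0 y hy, hF3 y hy]
    push_cast
    ring
  have hX0 : pd 0 (Xop a F) x
      = ((((x 1) ^ 2 + a ^ 2) * w x : ℝ) : ℂ) * pd 0 (pd 0 G) x
        + ((a * w x : ℝ) : ℂ) * pd 0 (pd 3 G) x := by
    rw [pd_congr 0 (evU hU hx hXFU),
      pd_add 0 (HA1w.diffC.fun_mul (hPd 0)) (Haw.diffC.fun_mul (hPd 3)),
      pd_mulc 0 HA1w (hPd 0), pd_mulc 0 Haw (hPd 3), HA1w.eval0, Haw.eval0]
    push_cast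
    ring
  have hX3 : pd 3 (Xop a F) x
      = ((((x 1) ^ 2 + a ^ 2) * w x : ℝ) : ℂ) * pd 0 (pd 3 G) x
        + ((a * w x : ℝ) : ℂ) * pd 3 (pd 3 G) x := by
    rw [pd_congr 3 (evU hU hx hXFU),
      pd_add 3 (HA1w.diffC.fun_mul (hPd 0)) (Haw.diffC.fun_mul (hPd 3)),
      pd_mulc 3 HA1w (hPd 0), pd_mulc 3 Haw (hPd 3), HA1w.eval3, Haw.eval3, hsym30]
    push_cast
    ring
  have hXXx : Xop a (Xop a F) x
      = ((w x : ℝ) : ℂ) * ((((x 1) ^ 2 + a ^ 2 : ℝ) : ℂ) ^ 2 * pd 0 (pd 0 G) x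
        + 2 * (a : ℂ) * (((x 1) ^ 2 + a ^ 2 : ℝ) : ℂ) * pd 0 (pd 3 G) x
        + (a : ℂ) ^ 2 * pd 3 (pd 3 G) x) := by
    rw [show Xop a (Xop a F) x
        = (((x 1) ^ 2 + a ^ 2 : ℝ) : ℂ) * pd 0 (Xop a F) x + (a : ℂ) * pd 3 (Xop a F) x from rfl,
      hX0, hX3]
    push_cast
    ring
  have hXx : Xop a F x
      = ((w x : ℝ) : ℂ) * ((((x 1) ^ 2 + a ^ 2 : ℝ) : ℂ) * pd 0 G x + (a : ℂ) * pd 3 G x) := by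
    rw [show Xop a F x = (((x 1) ^ 2 + a ^ 2 : ℝ) : ℂ) * pd 0 F x + (a : ℂ) * pd 3 F x from rfl,
      hF0 x hx, hF3 x hx]
    push_cast
    ring
  -- Y operator
  have hYFU : ∀ y ∈ U, Yop a F y
      = (((a * (1 - (y 2) ^ 2)) * w y : ℝ) : ℂ) * pd 0 G y + ((w y : ℝ) : ℂ) * pd 3 G y := by
    intro y hy
    simp only [Yop]
    rw [hF0 y hy, hF3 y hy]
    push_cast
    ring
  have hY0 : pd 0 (Yop a F) x
      = (((a * (1 - (x 2) ^ 2)) * w x : ℝ) : ℂ) * pd 0 (pd 0 G) x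
        + ((w x : ℝ) : ℂ) * pd 0 (pd 3 G) x := by
    rw [pd_congr 0 (evU hU hx hYFU),
      pd_add 0 (HA2w.diffC.fun_mul (hPd 0)) (Hw.diffC.fun_mul (hPd 3)),
      pd_mulc 0 HA2w (hPd 0), pd_mulc 0 Hw (hPd 3), HA2w.eval0, Hw.eval0]
    push_cast
    ring
  have hY3 : pd 3 (Yop a F) x
      = (((a * (1 - (x 2) ^ 2)) * w x : ℝ) : ℂ) * pd 0 (pd 3 G) x
        + ((w x : ℝ) : ℂ) * pd 3 (pd 3 G) x := by
    rw [pd_congr 3 (evU hU hx hYFU),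
      pd_add 3 (HA2w.diffC.fun_mul (hPd 0)) (Hw.diffC.fun_mul (hPd 3)),
      pd_mulc 3 HA2w (hPd 0), pd_mulc 3 Hw (hPd 3), HA2w.eval3, Hw.eval3, hsym30]
    push_cast
    ring
  have hYYx : Yop a (Yop a F) x
      = ((w x : ℝ) : ℂ) * (((a * (1 - (x 2) ^ 2) : ℝ) : ℂ) ^ 2 * pd 0 (pd 0 G) x
        + 2 * ((a * (1 - (x 2) ^ 2) : ℝ) : ℂ) * pd 0 (pd 3 G) x
        + pd 3 (pd 3 G) x) := by
    rw [show Yop a (Yop a F) x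
        = ((a * (1 - (x 2) ^ 2) : ℝ) : ℂ) * pd 0 (Yop a F) x + pd 3 (Yop a F) x from rfl,
      hY0, hY3]
    push_cast
    ring
  have hYx : Yop a F x
      = ((w x : ℝ) : ℂ) * (((a * (1 - (x 2) ^ 2) : ℝ) : ℂ) * pd 0 G x + pd 3 G x) := by
    rw [show Yop a F x = ((a * (1 - (x 2) ^ 2) : ℝ) : ℂ) * pd 0 F x + pd 3 F x from rfl,
      hF0 x hx, hF3 x hx]
    push_cast
    ring
  -- RHS divergence terms
  have HCk : HD (fun z => Cf M a z ^ (k + 1))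
      ((k + 1) * Cf M a x ^ (k + 1 - 1) * (2 * x 1 - 2 * M))
      ((k + 1) * Cf M a x ^ (k + 1 - 1) * 0) x := (HD_Cf M a x).rpow (k + 1) hc.ne'
  have hT4 : pd 1 (fun y => ((Cf M a y ^ (k + 1) : ℝ) : ℂ) * pd 1 G y) x
      = (((k + 1) * Cf M a x ^ (k + 1 - 1) * (2 * x 1 - 2 * M) : ℝ) : ℂ) * pd 1 G x
        + ((Cf M a x ^ (k + 1) : ℝ) : ℂ) * pd 1 (pd 1 G) x := by
    rw [pd_mulc 1 HCk (hPd 1), HCk.eval1]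
  have hT5 : pd 2 (fun y => ((Df y : ℝ) : ℂ) * pd 2 G y) x
      = ((-2 * x 2 : ℝ) : ℂ) * pd 2 G x + ((Df x : ℝ) : ℂ) * pd 2 (pd 2 G) x := by
    rw [pd_mulc 2 (HD_Df x) (hPd 2), (HD_Df x).eval2]
  -- assemble
  have hdW1 := HW1x.eval1
  have hdW2 := HW2x.eval2
  simp only [Ok', OkT]
  rw [hXXx, hp11, hXx, hYYx, hp22, hYx, hT4, hT5, hF0 x hx, hFeq x hx,
    hdW1, hdW2]
  -- unfold the weights
  simp only [hwdef, hW1def, hW2def]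
  -- rewrite remaining rpow's in terms of the basic atoms
  have e2' : Cf M a x ^ (p - 1 - 1) = Cf M a x ^ p / Cf M a x / Cf M a x := by
    rw [Real.rpow_sub hc, Real.rpow_sub hc, Real.rpow_one]
  have e1' : Cf M a x ^ (p - 1) = Cf M a x ^ p / Cf M a x := by
    rw [Real.rpow_sub hc, Real.rpow_one]
  have e3' : Cf M a x ^ (k + 1) = Cf M a x ^ k * Cf M a x := by
    rw [Real.rpow_add hc, Real.rpow_one]
  have e4' : Cf M a x ^ (k + 1 - 1) = Cf M a x ^ k := by rw [add_sub_cancel_right]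
  have e5' : Cf M a x ^ (-k) = (Cf M a x ^ k)⁻¹ := Real.rpow_neg hc.le k
  have e7' : Df x ^ ((1:ℝ)/2 - 1 - 1) = Df x ^ ((1:ℝ)/2) / Df x / Df x := by
    rw [Real.rpow_sub hd, Real.rpow_sub hd, Real.rpow_one]
  have e6' : Df x ^ ((1:ℝ)/2 - 1) = Df x ^ ((1:ℝ)/2) / Df x := by
    rw [Real.rpow_sub hd, Real.rpow_one]
  rw [e2', e1', e3', e4', e5', e7', e6']
  -- abstract the rpow atoms
  have hA0 : Cf M a x ^ p ≠ 0 := (Real.rpow_pos_of_pos hc p).ne'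
  have hK0 : Cf M a x ^ k ≠ 0 := (Real.rpow_pos_of_pos hc k).ne'
  have hB0 : Df x ^ ((1:ℝ)/2) ≠ 0 := (Real.rpow_pos_of_pos hd ((1:ℝ)/2)).ne'
  have hc0 := hc.ne'
  have hd0 := hd.ne'
  generalize hA : Cf M a x ^ p = A at hA0 ⊢
  generalize hK : Cf M a x ^ k = K at hK0 ⊢
  generalize hB : Df x ^ ((1:ℝ)/2) = B at hB0 ⊢
  have hc0X : Cf M a x ≠ 0 := hc.ne'
  have hd0X : Df x ≠ 0 := hd.ne'
  simp only [Cf, Df] at hc0X hd0X ⊢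
  clear_value G w W1 W2 p
  subst hpdef
  have hc0C : ((x 1:ℂ))^2 - 2*(M:ℂ)*(x 1:ℂ) + (a:ℂ)^2 ≠ 0 := by exact_mod_cast hc0X
  have hd0C : (1:ℂ) - (x 2:ℂ)^2 ≠ 0 := by exact_mod_cast hd0X
  have hK0C : (K:ℂ) ≠ 0 := by exact_mod_cast hK0
  push_cast
  have hC1 : 1/((x 1:ℂ)^2 - 2*(M:ℂ)*(x 1:ℂ) + (a:ℂ)^2)*((x 1:ℂ)^2 - 2*(M:ℂ)*(x 1:ℂ) + (a:ℂ)^2) = 1 := one_div_mul_cancel hc0C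
  have hD1 : 1/(1 - (x 2:ℂ)^2)*(1 - (x 2:ℂ)^2) = 1 := one_div_mul_cancel hd0C
  have hK1 : ((K:ℂ))⁻¹*(K:ℂ) = 1 := inv_mul_cancel₀ hK0C
  have h00 : 1/((x 1:ℂ)^2 - 2*(M:ℂ)*(x 1:ℂ) + (a:ℂ)^2)*((B:ℂ)*(A:ℂ))*((x 1:ℂ)^2+(a:ℂ)^2)^2 - 1/(1 - (x 2:ℂ)^2)*((B:ℂ)*(A:ℂ))*((a:ℂ)*(1 - (x 2:ℂ)^2))^2
      = ((B:ℂ)*(A:ℂ))*(((x 1:ℂ)^2+(a:ℂ)^2)^2/((x 1:ℂ)^2 - 2*(M:ℂ)*(x 1:ℂ) + (a:ℂ)^2) - (a:ℂ)^2*(1 - (x 2:ℂ)^2)) := by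
    linear_combination (-((B:ℂ)*(A:ℂ))*(a:ℂ)^2*(1 - (x 2:ℂ)^2))*hD1
  have h03 : 1/((x 1:ℂ)^2 - 2*(M:ℂ)*(x 1:ℂ) + (a:ℂ)^2)*((B:ℂ)*(A:ℂ))*(2*(a:ℂ)*((x 1:ℂ)^2+(a:ℂ)^2)) - 1/(1 - (x 2:ℂ)^2)*((B:ℂ)*(A:ℂ))*(2*((a:ℂ)*(1 - (x 2:ℂ)^2)))
      = ((B:ℂ)*(A:ℂ))*(4*(M:ℂ)*(a:ℂ)*(x 1:ℂ)/((x 1:ℂ)^2 - 2*(M:ℂ)*(x 1:ℂ) + (a:ℂ)^2)) := by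
    linear_combination (2*(a:ℂ)*((B:ℂ)*(A:ℂ)))*hC1 - (2*(a:ℂ)*((B:ℂ)*(A:ℂ)))*hD1
  have h1 : -(((x 1:ℂ)^2 - 2*(M:ℂ)*(x 1:ℂ) + (a:ℂ)^2)*(2*((B:ℂ)*((1+(k:ℂ))/2*((A:ℂ)/((x 1:ℂ)^2 - 2*(M:ℂ)*(x 1:ℂ) + (a:ℂ)^2))*(2*(x 1:ℂ)-2*(M:ℂ))))))
      = ((B:ℂ)*(A:ℂ))*(-(((K:ℂ))⁻¹*(((k:ℂ)+1)*(K:ℂ)*(2*(x 1:ℂ)-2*(M:ℂ))))) := by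
    linear_combination (-(1+(k:ℂ))*((B:ℂ)*(A:ℂ))*(2*(x 1:ℂ)-2*(M:ℂ)))*hC1
      + ((1+(k:ℂ))*((B:ℂ)*(A:ℂ))*(2*(x 1:ℂ)-2*(M:ℂ)))*hK1
  have h11 : -(((x 1:ℂ)^2 - 2*(M:ℂ)*(x 1:ℂ) + (a:ℂ)^2)*((B:ℂ)*(A:ℂ))) = ((B:ℂ)*(A:ℂ))*(-(((K:ℂ))⁻¹*((K:ℂ)*((x 1:ℂ)^2 - 2*(M:ℂ)*(x 1:ℂ) + (a:ℂ)^2)))) := by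
    linear_combination (((B:ℂ)*(A:ℂ))*((x 1:ℂ)^2 - 2*(M:ℂ)*(x 1:ℂ) + (a:ℂ)^2))*hK1
  have h2 : -((1 - (x 2:ℂ)^2)*(2*((1:ℂ)/2*((B:ℂ)/(1 - (x 2:ℂ)^2))*(-2*(x 2:ℂ))*(A:ℂ))))
      = ((B:ℂ)*(A:ℂ))*(-(-2*(x 2:ℂ))) := by
    linear_combination (2*(x 2:ℂ)*((B:ℂ)*(A:ℂ)))*hD1
  have h0 : (4*(k:ℂ)*(x 1:ℂ))*((B:ℂ)*(A:ℂ)) - (k:ℂ)*(2*((x 1:ℂ)-(M:ℂ))/((x 1:ℂ)^2 - 2*(M:ℂ)*(x 1:ℂ) + (a:ℂ)^2))*(((B:ℂ)*(A:ℂ))*((x 1:ℂ)^2+(a:ℂ)^2))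
        - 4*Complex.I*(k:ℂ)*(a:ℂ)*(x 2:ℂ)*((B:ℂ)*(A:ℂ)) - Complex.I*(k:ℂ)*(-2*(x 2:ℂ)/(1 - (x 2:ℂ)^2))*(((B:ℂ)*(A:ℂ))*((a:ℂ)*(1 - (x 2:ℂ)^2)))
      = ((B:ℂ)*(A:ℂ))*(-((2*(k:ℂ))*(((M:ℂ)*((x 1:ℂ)^2-(a:ℂ)^2)/((x 1:ℂ)^2 - 2*(M:ℂ)*(x 1:ℂ) + (a:ℂ)^2) - (x 1:ℂ)) + Complex.I*(a:ℂ)*(x 2:ℂ)))) := by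
    linear_combination (-2*(k:ℂ)*(x 1:ℂ)*((B:ℂ)*(A:ℂ)))*hC1 + (2*Complex.I*(k:ℂ)*(a:ℂ)*(x 2:ℂ)*((B:ℂ)*(A:ℂ)))*hD1
  have hg : -(((x 1:ℂ)^2 - 2*(M:ℂ)*(x 1:ℂ) + (a:ℂ)^2)*((B:ℂ)*((1+(k:ℂ))/2*((1+(k:ℂ))/2-1)*((A:ℂ)/((x 1:ℂ)^2 - 2*(M:ℂ)*(x 1:ℂ) + (a:ℂ)^2)/((x 1:ℂ)^2 - 2*(M:ℂ)*(x 1:ℂ) + (a:ℂ)^2))*(2*(x 1:ℂ)-2*(M:ℂ))^2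
          + 2*((1+(k:ℂ))/2)*((A:ℂ)/((x 1:ℂ)^2 - 2*(M:ℂ)*(x 1:ℂ) + (a:ℂ)^2)))))
        - (1 - (x 2:ℂ)^2)*(((1:ℂ)/2*((1/2-1)*((B:ℂ)/(1 - (x 2:ℂ)^2)/(1 - (x 2:ℂ)^2))*(-2*(x 2:ℂ)))*(-2*(x 2:ℂ)) + (1:ℂ)/2*((B:ℂ)/(1 - (x 2:ℂ)^2))*(-2))*(A:ℂ))
        + (((k:ℂ)^2-1)*((x 2:ℂ)^2/(1 - (x 2:ℂ)^2) + ((x 1:ℂ)-(M:ℂ))^2/((x 1:ℂ)^2 - 2*(M:ℂ)*(x 1:ℂ) + (a:ℂ)^2)))*((B:ℂ)*(A:ℂ))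
      = ((B:ℂ)*(A:ℂ))*((k:ℂ)^2*(x 2:ℂ)^2/(1 - (x 2:ℂ)^2) - (k:ℂ)) := by
    linear_combination (-((B:ℂ)*(A:ℂ))*((1+(k:ℂ))/2)*((1+(k:ℂ))/2-1)*(2*(x 1:ℂ)-2*(M:ℂ))^2*(1/((x 1:ℂ)^2 - 2*(M:ℂ)*(x 1:ℂ) + (a:ℂ)^2))
        - 2*((1+(k:ℂ))/2)*((B:ℂ)*(A:ℂ)))*hC1
      + ((x 2:ℂ)^2*((B:ℂ)*(A:ℂ))*(1/(1 - (x 2:ℂ)^2)) + ((B:ℂ)*(A:ℂ)))*hD1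
  linear_combination (pd 0 (pd 0 G) x)*h00 + (pd 0 (pd 3 G) x)*h03 + (pd 1 G x)*h1
    + (pd 1 (pd 1 G) x)*h11 + (pd 2 G x)*h2 + (pd 0 G x)*h0 + (G x)*hg

end TeukolskySimilarity
end
end

section
/- Radial conjugation, special case m = −(1+k)/2. Fix real M, a, k and set Δ(r) = r² − 2Mr + a². Let r₀ ∈ ℝ with Δ(r₀) > 0 and let φ : ℝ → ℂ be twice continuously differentiable on a neighbourhood of r₀ on which Δ > 0. Then at r₀: Δ^{(1+k)/2} · Δ^{−k} · d/dr[ Δ^{k+1} · d/dr( Δ^{−(1+k)/2} φ ) ] = Δ φ'' − ( (k + 1) + (k² − 1)(r − M)²/Δ ) φ; in particular the first-derivative term is absent. -/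
/-!
Put `p = -(1 + k) / 2`, so that the weight is `Δ ^ (k + 1) = Δ ^ (-2 p)`. For this weight
`Δ^(-2p) (Δ^p φ)' = Δ^(-p) φ' + p Δ^(-p-1) Δ' φ`, and differentiating once more the two
`φ'`-terms, `-p Δ^(-p-1) Δ' φ'` and `p Δ^(-p-1) Δ' φ'`, cancel. Multiplying by
`Δ^(1+p) = Δ^((1+k)/2) Δ^(-k)` leaves `Δ φ'' + (p Δ'' - p (p + 1) Δ'^2 / Δ) φ`, and
`Δ' = 2 (r - M)`, `Δ'' = 2` turn the coefficient into `-((k + 1) + (k² - 1) (r - M)² / Δ)`.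
-/

open Filter Topology

theorem HasDerivAt.ofReal_rpow_mul {D : ℝ → ℝ} {d : ℝ} {φ : ℝ → ℂ} {φ' : ℂ} {r : ℝ}
    (p : ℝ) (hD : HasDerivAt D d r) (hDr : D r ≠ 0) (hφ : HasDerivAt φ φ' r) :
    HasDerivAt (fun x => ((D x ^ p : ℝ) : ℂ) * φ x)
      (((p * D r ^ (p - 1) * d : ℝ) : ℂ) * φ r + ((D r ^ p : ℝ) : ℂ) * φ') r := by
  refine (((hD.rpow_const (p := p) (Or.inl hDr)).ofReal_comp).mul hφ).congr_deriv ?_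
  push_cast
  ring

section

variable {D D' : ℝ → ℝ} {φ φ' : ℝ → ℂ} {r₀ : ℝ} {s p : ℝ}

theorem rpow_mul_deriv_rpow_mul_eventuallyEq (hsp : s + 2 * p = 0)
    (hD : ∀ᶠ r in 𝓝 r₀, HasDerivAt D (D' r) r ∧ 0 < D r)
    (hφ : ∀ᶠ r in 𝓝 r₀, HasDerivAt φ (φ' r) r) :
    (fun r => ((D r ^ s : ℝ) : ℂ) * deriv (fun r' => ((D r' ^ p : ℝ) : ℂ) * φ r') r)
      =ᶠ[𝓝 r₀] fun r => ((D r ^ (-p) : ℝ) : ℂ) * φ' r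
        + ((D r ^ (-p - 1) : ℝ) : ℂ) * (((p * D' r : ℝ) : ℂ) * φ r) := by
  filter_upwards [hD, hφ] with r ⟨hDr, hpos⟩ hφr
  rw [(hDr.ofReal_rpow_mul p hpos.ne' hφr).deriv]
  have e1 : D r ^ s * D r ^ (p - 1) = D r ^ (-p - 1) := by
    rw [← Real.rpow_add hpos]; congr 1; linarith
  have e2 : D r ^ s * D r ^ p = D r ^ (-p) := by
    rw [← Real.rpow_add hpos]; congr 1; linarith
  rw [← e1, ← e2]
  push_cast
  ring

theorem deriv_rpow_mul_deriv_rpow_mul {D'' : ℝ} {φ'' : ℂ} (hsp : s + 2 * p = 0)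
    (hD : ∀ᶠ r in 𝓝 r₀, HasDerivAt D (D' r) r ∧ 0 < D r) (hD' : HasDerivAt D' D'' r₀)
    (hφ : ∀ᶠ r in 𝓝 r₀, HasDerivAt φ (φ' r) r) (hφ' : HasDerivAt φ' φ'' r₀) :
    ((D r₀ ^ (1 + p) : ℝ) : ℂ) *
        deriv (fun r => ((D r ^ s : ℝ) : ℂ) * deriv (fun r' => ((D r' ^ p : ℝ) : ℂ) * φ r') r) r₀
      = (D r₀ : ℂ) * φ'' + ((p * D'' - p * (p + 1) * D' r₀ ^ 2 / D r₀ : ℝ) : ℂ) * φ r₀ := by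
  obtain ⟨⟨hD₀, hpos⟩, hφ₀⟩ := (hD.and hφ).self_of_nhds
  have hψ : HasDerivAt (fun r => ((p * D' r : ℝ) : ℂ) * φ r)
      (((p * D'' : ℝ) : ℂ) * φ r₀ + ((p * D' r₀ : ℝ) : ℂ) * φ' r₀) r₀ :=
    ((hD'.const_mul p).ofReal_comp).mul hφ₀
  have hG : HasDerivAt (fun r => ((D r ^ (-p) : ℝ) : ℂ) * φ' r
      + ((D r ^ (-p - 1) : ℝ) : ℂ) * (((p * D' r : ℝ) : ℂ) * φ r)) _ r₀ :=
    (hD₀.ofReal_rpow_mul (-p) hpos.ne' hφ').add (hD₀.ofReal_rpow_mul (-p - 1) hpos.ne' hψ)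
  rw [(rpow_mul_deriv_rpow_mul_eventuallyEq hsp hD hφ).deriv_eq, hG.deriv]
  set x := D r₀
  have h1 : x ^ (-p - 1) = (x ^ (1 + p))⁻¹ := by
    rw [← Real.rpow_neg hpos.le]; ring_nf
  have h0 : x ^ (-p) = x * (x ^ (1 + p))⁻¹ := by
    rw [← h1, mul_comm, ← Real.rpow_add_one hpos.ne']; ring_nf
  have h2 : x ^ (-p - 1 - 1) = (x ^ (1 + p))⁻¹ / x := by
    rw [Real.rpow_sub_one hpos.ne', h1]
  have hx : x ^ (1 + p) ≠ 0 := (Real.rpow_pos_of_pos hpos _).ne'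
  have hxC : ((x ^ (1 + p) : ℝ) : ℂ) ≠ 0 := by exact_mod_cast hx
  have hx0 : (x : ℂ) ≠ 0 := by exact_mod_cast hpos.ne'
  rw [h0, h1, h2]
  push_cast
  field_simp
  ring

end

/-- Radial conjugation identity, special case `m = −(1+k)/2`: the first-derivative
term is absent and
`Δ^{(1+k)/2} Δ^{−k} (Δ^{k+1} (Δ^{−(1+k)/2} φ)')' = Δ φ'' − ((k+1) + (k²−1)(r−M)²/Δ) φ`. -/
theorem radial_conjugation_special (M a k : ℝ)
    (Δ : ℝ → ℝ) (hΔ : ∀ r, Δ r = r ^ 2 - 2 * M * r + a ^ 2)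
    (r₀ : ℝ) (V : Set ℝ) (hV : IsOpen V) (hr₀ : r₀ ∈ V)
    (hpos : ∀ r ∈ V, 0 < Δ r)
    (φ : ℝ → ℂ) (hφ : ContDiffOn ℝ 2 φ V) :
    ((Δ r₀ ^ ((1 + k) / 2) : ℝ) : ℂ) * ((Δ r₀ ^ (-k) : ℝ) : ℂ) *
      deriv (fun r => ((Δ r ^ (k + 1) : ℝ) : ℂ) *
        deriv (fun r' => ((Δ r' ^ (-((1 + k) / 2)) : ℝ) : ℂ) * φ r') r) r₀
    = (Δ r₀ : ℂ) * deriv (deriv φ) r₀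
      - (((k + 1) : ℝ) + (((k ^ 2 - 1) * (r₀ - M) ^ 2 / Δ r₀ : ℝ) : ℂ)) * φ r₀ := by
  have hV₀ : V ∈ 𝓝 r₀ := hV.mem_nhds hr₀
  have hΔ' (r : ℝ) : HasDerivAt Δ (2 * r - 2 * M) r := by
    rw [funext hΔ]
    exact (((hasDerivAt_pow 2 r).sub ((hasDerivAt_id r).const_mul (2 * M))).add_const _).congr_deriv
      (by simp)
  have hΔ'' : HasDerivAt (fun r => 2 * r - 2 * M) 2 r₀ :=
    (((hasDerivAt_id r₀).const_mul 2).sub_const (2 * M)).congr_deriv (mul_one 2)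
  have hφ' : ∀ᶠ r in 𝓝 r₀, HasDerivAt φ (deriv φ r) r := by
    filter_upwards [hV₀] with r hr
    exact ((hφ.differentiableOn two_ne_zero).differentiableAt (hV.mem_nhds hr)).hasDerivAt
  have hφ'' : HasDerivAt (deriv φ) (deriv (deriv φ) r₀) r₀ :=
    (((hφ.deriv_of_isOpen hV (by norm_num)).differentiableOn one_ne_zero).differentiableAt
      hV₀).hasDerivAt
  have hA := hpos r₀ hr₀
  have hcoef : -((1 + k) / 2) * 2 - -((1 + k) / 2) * (-((1 + k) / 2) + 1) * (2 * r₀ - 2 * M) ^ 2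
      / Δ r₀ = -((k + 1) + (k ^ 2 - 1) * (r₀ - M) ^ 2 / Δ r₀) := by
    field_simp
    ring
  rw [← Complex.ofReal_mul, ← Real.rpow_add hA, show (1 + k) / 2 + -k = 1 + -((1 + k) / 2) by ring,
    deriv_rpow_mul_deriv_rpow_mul (s := k + 1) (p := -((1 + k) / 2)) (by ring)
      (by filter_upwards [hV₀] with r hr using ⟨hΔ' r, hpos r hr⟩) hΔ'' hφ' hφ'', hcoef]
  push_cast
  ring
end
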